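/- arXiv:1305.0610 — 2 statements merged into one kernel-verified Lean document; each statement's English description precedes it below -/
import Mathlib

section
/- Let $f \in L^2(E,\mu)$ with eigenfunction expansion coefficients $a_j^k = \langle f, \phi_j^{(k)}\rangle$ and let $\gamma(f)$ be the smallest $k$ with some $a_j^k \ne 0$. Then for any $t_1 > 0$ there is a constant $C$ such that for all $t > t_1$ and $x \in E$: $e^{\lambda_{\gamma(f)} t} |T_t f(x)| \le C\, a_{t_1}(x)^{1/2}$, where $a_t(x) = q_t(x,x)$. -/
/-!
Integrating the kernel expansion of `q_t(x, ·)` against `f` term by term gives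
`T_t f(x) = ∑_k e^{-λ_k t} ∑_j φ_j^(k)(x) ⟨f, φ_j^(k)⟩`, whose terms with `k < γ` vanish.
Each term of the series `a_{t₁}(x) = ∑_k e^{-λ_k t₁} ∑_j φ_j^(k)(x)²` is bounded by its sum, so
`∑_j |φ_j^(k)(x)| ≤ n_k e^{λ_k t₁ / 2} a_{t₁}(x)^{1/2}`, and integrating the series shows
`∑_k n_k e^{-λ_k s} < ∞` for all `s > 0`. The coefficients are uniformly bounded, and for `k ≥ γ`,
`t ≥ t₁` we have `e^{λ_γ t - λ_k (t - t₁/2)} ≤ e^{λ_γ t₁} e^{-λ_k t₁ / 2}`, so the renormalised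
series is dominated by `a_{t₁}(x)^{1/2}` times a convergent series independent of `t`.
-/

open MeasureTheory Real

section L2

variable {E : Type*} [MeasurableSpace E] {μ : Measure E}

theorem memLp_two_of_integral_mul_self_eq_one {g : E → ℝ} (hg : Measurable g)
    (h : ∫ x, g x * g x ∂μ = 1) : MemLp g 2 μ := by
  -- a non-integrable function would have Bochner integral `0`
  refine (memLp_two_iff_integrable_sq hg.aestronglyMeasurable).2 ?_
  simp only [sq]
  by_contra hint
  rw [integral_undef hint] at h
  exact zero_ne_one h

theorem integral_abs_mul_le_half_add_sq {f g : E → ℝ} (hf : MemLp f 2 μ) (hg : MemLp g 2 μ) :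
    ∫ x, |f x * g x| ∂μ ≤ (∫ x, f x ^ 2 ∂μ + ∫ x, g x ^ 2 ∂μ) / 2 := by
  have hfg : Integrable (fun x => |f x * g x|) μ := (hf.integrable_mul hg).abs
  rw [← integral_add hf.integrable_sq hg.integrable_sq, ← integral_div]
  refine integral_mono hfg ((hf.integrable_sq.add hg.integrable_sq).div_const 2) fun x => ?_
  have := two_mul_le_add_sq |f x| |g x|
  rw [sq_abs, sq_abs] at this
  rw [abs_mul]
  dsimp only [Pi.add_apply]
  linarith

theorem exists_integral_abs_mul_le {ι : Type*} {ψ : ι → E → ℝ}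
    (hψ : ∀ i, MemLp (ψ i) 2 μ) (hnorm : ∀ i, ∫ x, ψ i x ^ 2 ∂μ = 1) {f : E → ℝ}
    (hf : MemLp f 2 μ) :
    ∃ M, 0 ≤ M ∧ ∀ i, ∫ x, |ψ i x * f x| ∂μ ≤ M := by
  refine ⟨(1 + ∫ x, f x ^ 2 ∂μ) / 2, ?_, fun i => ?_⟩
  · have : 0 ≤ ∫ x, f x ^ 2 ∂μ := integral_nonneg fun x => sq_nonneg (f x)
    positivity
  · simpa only [hnorm] using integral_abs_mul_le_half_add_sq (hψ i) hf

theorem hasSum_integral_mul_of_hasSum {F : ℕ → E → ℝ} {G g : E → ℝ}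
    (hF : ∀ y, HasSum (fun k => F k y) (G y))
    (hint : ∀ k, Integrable (fun y => F k y * g y) μ)
    (hsum : Summable fun k => ∫ y, |F k y * g y| ∂μ) :
    HasSum (fun k => ∫ y, F k y * g y ∂μ) (∫ y, G y * g y ∂μ) := by
  have h := hasSum_integral_of_summable_integral_norm hint (by simpa only [Real.norm_eq_abs])
  simpa only [fun y => ((hF y).mul_right (g y)).tsum_eq] using h

end L2

theorem sum_abs_le_card_mul_sqrt_sum_sq {ι : Type*} [Fintype ι] (v : ι → ℝ) :
    ∑ i, |v i| ≤ Fintype.card ι * √(∑ i, v i ^ 2) := by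
  calc ∑ i, |v i| ≤ ∑ _i : ι, √(∑ i, v i ^ 2) := Finset.sum_le_sum fun i _ =>
        Real.abs_le_sqrt (Finset.single_le_sum (fun i _ => sq_nonneg (v i)) (Finset.mem_univ i))
    _ = Fintype.card ι * √(∑ i, v i ^ 2) := by simp

theorem abs_exp_mul_le_of_decay {l l' t₁ t c I : ℝ} (ht : t₁ ≤ t) (hc : 0 ≤ c)
    (hI : |I| ≤ c * exp (-l' * (t - t₁ / 2))) (hl : l ≤ l' ∨ I = 0) :
    |exp (l * t) * I| ≤ exp (l * t₁) * (c * exp (-l' * (t₁ / 2))) := by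
  rcases hl with hl | rfl
  · rw [abs_mul, abs_of_pos (exp_pos _)]
    calc exp (l * t) * |I| ≤ c * (exp (l * t) * exp (-l' * (t - t₁ / 2))) := by
          nlinarith [exp_pos (l * t)]
      _ ≤ c * (exp (l * t₁) * exp (-l' * (t₁ / 2))) := by
          gcongr c * ?_
          rw [← exp_add, ← exp_add, exp_le_exp]
          nlinarith [mul_nonneg (sub_nonneg.2 hl) (sub_nonneg.2 ht)]
      _ = exp (l * t₁) * (c * exp (-l' * (t₁ / 2))) := by ring
  · simp only [mul_zero, abs_zero]
    positivity

theorem exp_mul_abs_le_of_hasSum {lam : ℕ → ℝ} (hlam : Monotone lam) {γ : ℕ} {I c : ℕ → ℝ}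
    {S t₁ t : ℝ} (hS : HasSum I S) (ht : t₁ ≤ t) (hc : ∀ k, 0 ≤ c k)
    (hI : ∀ k, |I k| ≤ c k * exp (-lam k * (t - t₁ / 2))) (hI0 : ∀ k < γ, I k = 0)
    (hsum : Summable fun k => c k * exp (-lam k * (t₁ / 2))) :
    exp (lam γ * t) * |S| ≤ exp (lam γ * t₁) * ∑' k, c k * exp (-lam k * (t₁ / 2)) := by
  have hterm k :
      ‖exp (lam γ * t) * I k‖ ≤ exp (lam γ * t₁) * (c k * exp (-lam k * (t₁ / 2))) :=
    abs_exp_mul_le_of_decay ht (hc k) (hI k) ((le_or_gt γ k).imp (hlam ·) (hI0 k))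
  calc exp (lam γ * t) * |S| = ‖∑' k, exp (lam γ * t) * I k‖ := by
        rw [tsum_mul_left, hS.tsum_eq, Real.norm_eq_abs, abs_mul, abs_of_pos (exp_pos _)]
    _ ≤ exp (lam γ * t₁) * ∑' k, c k * exp (-lam k * (t₁ / 2)) := by
        rw [← tsum_mul_left]
        exact tsum_of_norm_bounded (hsum.mul_left _).hasSum hterm

section Spectral

variable {E : Type*} {n : ℕ → ℕ} {φ : (k : ℕ) → Fin (n k) → E → ℝ} {lam : ℕ → ℝ}

theorem sum_sq_le_exp_mul_of_hasSum {x : E} {t A : ℝ}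
    (hA : HasSum (fun k => exp (-lam k * t) * ∑ j, φ k j x ^ 2) A) (k : ℕ) :
    ∑ j, φ k j x ^ 2 ≤ exp (lam k * t) * A := by
  have hle := le_hasSum hA k fun i _ => by positivity
  calc ∑ j, φ k j x ^ 2 = exp (lam k * t) * (exp (-lam k * t) * ∑ j, φ k j x ^ 2) := by
        rw [← mul_assoc, ← exp_add, neg_mul, add_neg_cancel, exp_zero, one_mul]
    _ ≤ exp (lam k * t) * A := by gcongr

theorem sum_abs_le_of_hasSum {x : E} {t A : ℝ}
    (hA : HasSum (fun k => exp (-lam k * t) * ∑ j, φ k j x ^ 2) A) (k : ℕ) :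
    ∑ j, |φ k j x| ≤ n k * (exp (lam k * (t / 2)) * √A) := by
  calc ∑ j, |φ k j x| ≤ n k * √(∑ j, φ k j x ^ 2) := by
        simpa using sum_abs_le_card_mul_sqrt_sum_sq fun j => φ k j x
    _ ≤ n k * √(exp (lam k * t) * A) := by gcongr; exact sum_sq_le_exp_mul_of_hasSum hA k
    _ = n k * (exp (lam k * (t / 2)) * √A) := by
        rw [sqrt_mul (exp_pos _).le, ← exp_half, mul_div_assoc]

/-- `k ↦ (e^{-λ_k t} ∑_j φ_j^(k)(x) φ_j^(k)(y)) f(y)` are the modes of `y ↦ q_t(x, y) f(y)`. -/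
theorem mode_mul_eq (f : E → ℝ) (t : ℝ) (x : E) (k : ℕ) :
    (fun y => (exp (-lam k * t) * ∑ j, φ k j x * φ k j y) * f y)
      = fun y => ∑ j, exp (-lam k * t) * φ k j x * (φ k j y * f y) := by
  funext y
  rw [Finset.mul_sum, Finset.sum_mul]
  exact Finset.sum_congr rfl fun j _ => by ring

variable [MeasurableSpace E] {μ : Measure E}

theorem summable_exp_mul_card (hφ : ∀ k j, MemLp (φ k j) 2 μ)
    (hnorm : ∀ k j, ∫ x, φ k j x ^ 2 ∂μ = 1) {s : ℝ} {A : E → ℝ}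
    (hA : ∀ x, HasSum (fun k => exp (-lam k * s) * ∑ j, φ k j x ^ 2) (A x))
    (hAint : Integrable A μ) : Summable fun k => n k * exp (-lam k * s) := by
  have hint : ∀ k, Integrable (fun x => exp (-lam k * s) * ∑ j, φ k j x ^ 2) μ :=
    fun k => (integrable_finsetSum _ fun j _ => (hφ k j).integrable_sq).const_mul _
  refine summable_of_sum_range_le (c := ∫ x, A x ∂μ) (fun k => by positivity) fun N => ?_
  calc ∑ k ∈ Finset.range N, n k * exp (-lam k * s)
      = ∫ x, ∑ k ∈ Finset.range N, exp (-lam k * s) * ∑ j, φ k j x ^ 2 ∂μ := by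
        rw [integral_finsetSum _ fun k _ => hint k]
        refine Finset.sum_congr rfl fun k _ => ?_
        rw [integral_const_mul, integral_finsetSum _ fun j _ => (hφ k j).integrable_sq]
        simp [hnorm, mul_comm]
    _ ≤ ∫ x, A x ∂μ := integral_mono (integrable_finsetSum _ fun k _ => hint k) hAint
        fun x => sum_le_hasSum _ (fun k _ => by positivity) (hA x)

variable {f : E → ℝ}

theorem integrable_mode_mul (hφf : ∀ k j, Integrable (fun y => φ k j y * f y) μ)
    (t : ℝ) (x : E) (k : ℕ) :
    Integrable (fun y => (exp (-lam k * t) * ∑ j, φ k j x * φ k j y) * f y) μ := by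
  rw [mode_mul_eq]
  exact integrable_finsetSum _ fun j _ => (hφf k j).const_mul _

theorem integral_mode_mul (hφf : ∀ k j, Integrable (fun y => φ k j y * f y) μ)
    (t : ℝ) (x : E) (k : ℕ) :
    ∫ y, (exp (-lam k * t) * ∑ j, φ k j x * φ k j y) * f y ∂μ
      = exp (-lam k * t) * ∑ j, φ k j x * ∫ y, φ k j y * f y ∂μ := by
  rw [mode_mul_eq, integral_finsetSum _ fun j _ => (hφf k j).const_mul _, Finset.mul_sum]
  exact Finset.sum_congr rfl fun j _ => by rw [integral_const_mul, mul_assoc]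

theorem integral_abs_mode_mul_le (hφf : ∀ k j, Integrable (fun y => φ k j y * f y) μ)
    (t : ℝ) (x : E) (k : ℕ) {M : ℝ} (hM : ∀ j, ∫ y, |φ k j y * f y| ∂μ ≤ M) :
    ∫ y, |(exp (-lam k * t) * ∑ j, φ k j x * φ k j y) * f y| ∂μ
      ≤ exp (-lam k * t) * (∑ j, |φ k j x|) * M := by
  have hint : ∀ j, Integrable (fun y => |exp (-lam k * t) * φ k j x| * |φ k j y * f y|) μ :=
    fun j => (hφf k j).abs.const_mul _
  calc ∫ y, |(exp (-lam k * t) * ∑ j, φ k j x * φ k j y) * f y| ∂μ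
      ≤ ∫ y, ∑ j, |exp (-lam k * t) * φ k j x| * |φ k j y * f y| ∂μ := by
        refine integral_mono (integrable_mode_mul hφf t x k).abs
          (integrable_finsetSum _ fun j _ => hint j) fun y => ?_
        simp only [congrFun (mode_mul_eq f t x k) y, ← abs_mul]
        exact Finset.abs_sum_le_sum_abs _ _
    _ = ∑ j, |exp (-lam k * t) * φ k j x| * ∫ y, |φ k j y * f y| ∂μ := by
        rw [integral_finsetSum _ fun j _ => hint j]
        simp only [integral_const_mul]
    _ ≤ ∑ j, |exp (-lam k * t) * φ k j x| * M :=
        Finset.sum_le_sum fun j _ => mul_le_mul_of_nonneg_left (hM j) (abs_nonneg _)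
    _ = exp (-lam k * t) * (∑ j, |φ k j x|) * M := by
        simp only [abs_mul, abs_of_pos (exp_pos _), ← Finset.sum_mul, ← Finset.mul_sum]

theorem integral_abs_mode_mul_le_of_hasSum (hφf : ∀ k j, Integrable (fun y => φ k j y * f y) μ)
    {x : E} {t₁ A M : ℝ} (hA : HasSum (fun k => exp (-lam k * t₁) * ∑ j, φ k j x ^ 2) A)
    (hM0 : 0 ≤ M) (hM : ∀ k j, ∫ y, |φ k j y * f y| ∂μ ≤ M) (t : ℝ) (k : ℕ) :
    ∫ y, |(exp (-lam k * t) * ∑ j, φ k j x * φ k j y) * f y| ∂μ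
      ≤ M * √A * n k * exp (-lam k * (t - t₁ / 2)) := by
  calc _ ≤ exp (-lam k * t) * (n k * (exp (lam k * (t₁ / 2)) * √A)) * M := by
        refine (integral_abs_mode_mul_le hφf t x k (hM k)).trans ?_
        gcongr
        exact sum_abs_le_of_hasSum hA k
    _ = M * √A * n k * exp (-lam k * (t - t₁ / 2)) := by
        rw [show -lam k * (t - t₁ / 2) = -lam k * t + lam k * (t₁ / 2) by ring, exp_add]
        ring

end Spectral

theorem stmt_9_general {E : Type*} [MeasurableSpace E] (μ : Measure E)
    (lam : ℕ → ℝ) (hlam : StrictMono lam)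
    (n : ℕ → ℕ) (φ : (k : ℕ) → Fin (n k) → E → ℝ)
    (hφmeas : ∀ k j, Measurable (φ k j))
    (horth : ∀ (k k' : ℕ) (j : Fin (n k)) (j' : Fin (n k')),
      ∫ x, φ k j x * φ k' j' x ∂μ = if k = k' ∧ (j : ℕ) = (j' : ℕ) then 1 else 0)
    (q : ℝ → E → E → ℝ)
    (hq : ∀ t x y, 0 < t →
      HasSum (fun k => Real.exp (-lam k * t) * ∑ j, φ k j x * φ k j y) (q t x y))
    (a : ℝ → E → ℝ) (ha : ∀ t x, a t x = q t x x)
    (hInt : ∀ t, 0 < t → Integrable (a t) μ)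
    (T : ℝ → (E → ℝ) → E → ℝ)
    (hT : ∀ t (g : E → ℝ) x, 0 < t → T t g x = ∫ y, q t x y * g y ∂μ)
    (f : E → ℝ) (hf : MemLp f 2 μ)
    -- γ is the smallest index with a nonzero coefficient
    (γ : ℕ)
    (hγlow : ∀ k < γ, ∀ j : Fin (n k), ∫ y, f y * φ k j y ∂μ = 0) :
    ∀ t₁ > (0 : ℝ), ∃ C : ℝ, ∀ t, t₁ < t → ∀ x,
      Real.exp (lam γ * t) * |T t f x| ≤ C * Real.sqrt (a t₁ x) := by
  intro t₁ ht₁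
  have hnorm k j : ∫ x, φ k j x ^ 2 ∂μ = 1 := by simpa [sq] using horth k k j j
  have hφ k j : MemLp (φ k j) 2 μ :=
    memLp_two_of_integral_mul_self_eq_one (hφmeas k j) (by simpa using horth k k j j)
  have hφf k j : Integrable (fun y => φ k j y * f y) μ := (hφ k j).integrable_mul hf
  obtain ⟨M, hM0, hM⟩ := exists_integral_abs_mul_le
    (ψ := fun p : Σ k, Fin (n k) => φ p.1 p.2) (fun p => hφ p.1 p.2) (fun p => hnorm p.1 p.2) hf
  have hdiag t x (ht : 0 < t) :
      HasSum (fun k => exp (-lam k * t) * ∑ j, φ k j x ^ 2) (a t x) := by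
    simpa only [ha, sq] using hq t x x ht
  have hsum s (hs : 0 < s) := summable_exp_mul_card hφ hnorm (hdiag s · hs) (hInt s hs)
  refine ⟨M * exp (lam γ * t₁) * ∑' k, n k * exp (-lam k * (t₁ / 2)), fun t ht x => ?_⟩
  have hsum' s (hs : 0 < s) : Summable fun k => M * √(a t₁ x) * n k * exp (-lam k * s) := by
    simpa only [mul_assoc] using (hsum s hs).mul_left (M * √(a t₁ x))
  have hmode :=
    integral_abs_mode_mul_le_of_hasSum hφf (hdiag t₁ x ht₁) hM0 (fun k j => hM ⟨k, j⟩) t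
  have hexp : HasSum (fun k => ∫ y, (exp (-lam k * t) * ∑ j, φ k j x * φ k j y) * f y ∂μ)
      (T t f x) := by
    rw [hT t f x (ht₁.trans ht)]
    exact hasSum_integral_mul_of_hasSum (hq t x · (ht₁.trans ht)) (integrable_mode_mul hφf t x)
      ((hsum' _ (by linarith)).of_nonneg_of_le
        (fun k => integral_nonneg fun _ => abs_nonneg _) hmode)
  have hlow k (hk : k < γ) :
      ∫ y, (exp (-lam k * t) * ∑ j, φ k j x * φ k j y) * f y ∂μ = 0 := by
    have hc j : ∫ y, φ k j y * f y ∂μ = 0 := by simpa only [mul_comm] using hγlow k hk j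
    simp only [integral_mode_mul hφf, hc, mul_zero, Finset.sum_const_zero]
  calc exp (lam γ * t) * |T t f x|
      ≤ exp (lam γ * t₁) * ∑' k, M * √(a t₁ x) * n k * exp (-lam k * (t₁ / 2)) :=
        exp_mul_abs_le_of_hasSum hlam.monotone hexp ht.le (fun k => by positivity)
          (fun k => abs_integral_le_integral_abs.trans (hmode k)) hlow (hsum' _ (half_pos ht₁))
    _ = _ := by simp only [mul_assoc, tsum_mul_left]; ring

/-- Uniform bound on the renormalized semigroup:
`e^{λ_{γ(f)} t} |T_t f(x)| ≤ C a_{t₁}(x)^{1/2}` for `t > t₁`. -/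
theorem stmt_9 {E : Type*} [MeasurableSpace E] (μ : Measure E) [SigmaFinite μ]
    (lam : ℕ → ℝ) (hlam : StrictMono lam)
    (n : ℕ → ℕ) (φ : (k : ℕ) → Fin (n k) → E → ℝ)
    (hφmeas : ∀ k j, Measurable (φ k j))
    (horth : ∀ (k k' : ℕ) (j : Fin (n k)) (j' : Fin (n k')),
      ∫ x, φ k j x * φ k' j' x ∂μ = if k = k' ∧ (j : ℕ) = (j' : ℕ) then 1 else 0)
    (q : ℝ → E → E → ℝ)
    (hq : ∀ t x y, 0 < t →
      HasSum (fun k => Real.exp (-lam k * t) * ∑ j, φ k j x * φ k j y) (q t x y))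
    (a : ℝ → E → ℝ) (ha : ∀ t x, a t x = q t x x)
    (hInt : ∀ t, 0 < t → Integrable (a t) μ)
    (T : ℝ → (E → ℝ) → E → ℝ)
    (hT : ∀ t (g : E → ℝ) x, 0 < t → T t g x = ∫ y, q t x y * g y ∂μ)
    (f : E → ℝ) (hf : MemLp f 2 μ)
    -- γ is the smallest index with a nonzero coefficient
    (γ : ℕ)
    (hγlow : ∀ k < γ, ∀ j : Fin (n k), ∫ y, f y * φ k j y ∂μ = 0)
    (hγne : ∃ j : Fin (n γ), ∫ y, f y * φ γ j y ∂μ ≠ 0) :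
    ∀ t₁ > (0 : ℝ), ∃ C : ℝ, ∀ t, t₁ < t → ∀ x,
      Real.exp (lam γ * t) * |T t f x| ≤ C * Real.sqrt (a t₁ x) :=
  stmt_9_general μ lam hlam n φ hφmeas horth q hq a ha hInt T hT f hf γ hγlow
end

section
/- In the same eigenfunction setting, for every $f \in L^2(E,\mu)$ with $\gamma(f) < \infty$ and every $x \in E$: $\lim_{t\to\infty} e^{\lambda_{\gamma(f)} t} T_t f(x) = \sum_{j=1}^{n_{\gamma(f)}} a_j^{\gamma(f)} \phi_j^{(\gamma(f))}(x)$, where $a_j^k = \langle f, \phi_j^{(k)}\rangle$. -/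
/-!
For `t > 0` the kernel expansion can be integrated termwise against `f`, giving
`T_t f(x) = ∑ₖ e^{-λₖ t} Sₖ(x)` with `Sₖ(x) = ∑ⱼ ⟨f, φⱼ⁽ᵏ⁾⟩ φⱼ⁽ᵏ⁾(x)`: by `|u| ≤ (1 + u²)/2` the
series `∑ₖ e^{-λₖ t} ∑ⱼ |φⱼ⁽ᵏ⁾(x)|` is dominated by the trace `∑ₖ e^{-λₖ t} nₖ ≤ ∫ q_t(y, y) dy`
plus the diagonal value `q_t(x, x)`, and `|⟨f, φⱼ⁽ᵏ⁾⟩|` is bounded uniformly. After multiplying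
by `e^{λ_γ t}` the terms with `k < γ` vanish, the term `k = γ` is constant, and for `t ≥ 1` the
terms with `k > γ` are dominated by their (summable) values at `t = 1` while tending to `0`, so
Tannery's theorem gives the limit `S_γ(x)`.
-/

open MeasureTheory Filter Topology

theorem abs_mul_le_add_sq_div_two (a b : ℝ) : |a * b| ≤ (a ^ 2 + b ^ 2) / 2 := by
  have := two_mul_le_add_sq |a| |b|
  rw [sq_abs, sq_abs, mul_assoc, ← abs_mul] at this
  linarith

theorem tendsto_exp_mul_tsum_of_eq_zero_of_lt {lam : ℕ → ℝ} (hlam : StrictMono lam)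
    {S : ℕ → ℝ} {γ : ℕ} (hS : ∀ k < γ, S k = 0) {t₀ : ℝ}
    (hsum : Summable fun k => Real.exp (-lam k * t₀) * |S k|) :
    Tendsto (fun t => Real.exp (lam γ * t) * ∑' k, Real.exp (-lam k * t) * S k) atTop
      (𝓝 (S γ)) := by
  have hexp : ∀ t k, Real.exp (lam γ * t) * (Real.exp (-lam k * t) * S k)
      = Real.exp ((lam γ - lam k) * t) * S k := fun t k => by
    rw [← mul_assoc, ← Real.exp_add]; ring_nf
  simp_rw [← tsum_mul_left, hexp]
  rw [← tsum_ite_eq γ (fun _ => S γ)]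
  refine tendsto_tsum_of_dominated_convergence
    (bound := fun k => Real.exp (lam γ * t₀) * (Real.exp (-lam k * t₀) * |S k|))
    (hsum.mul_left _) (fun k => ?_) ?_
  · rcases lt_trichotomy k γ with hk | rfl | hk
    · simp [hS k hk, hk.ne]
    · simp
    · have hdecay : Tendsto (fun t => Real.exp ((lam γ - lam k) * t)) atTop (𝓝 0) :=
        Real.tendsto_exp_atBot.comp
          (tendsto_id.const_mul_atTop_of_neg (sub_neg.2 (hlam hk)))
      simpa [hk.ne'] using hdecay.mul_const (S k)
  · filter_upwards [eventually_ge_atTop t₀] with t ht k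
    rcases lt_or_ge k γ with hk | hk
    · simp [hS k hk]
    · rw [← mul_assoc, ← Real.exp_add, norm_mul, Real.norm_of_nonneg (Real.exp_pos _).le,
        Real.norm_eq_abs]
      have hgap : lam γ - lam k ≤ 0 := sub_nonpos.2 (hlam.monotone hk)
      gcongr
      nlinarith

theorem summable_mul_sum_abs {n : ℕ → ℕ} {u : ℕ → ℝ} {v : (k : ℕ) → Fin (n k) → ℝ}
    (hu : ∀ k, 0 ≤ u k) (hn : Summable fun k => u k * n k)
    (hv : Summable fun k => u k * ∑ j, v k j ^ 2) :
    Summable fun k => u k * ∑ j, |v k j| := by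
  refine ((hn.add hv).div_const 2).of_nonneg_of_le
    (fun k => mul_nonneg (hu k) (Finset.sum_nonneg fun j _ => abs_nonneg _)) fun k => ?_
  have hle : ∑ j, |v k j| ≤ (n k + ∑ j, v k j ^ 2) / 2 := by
    have := Finset.sum_le_sum fun j (_ : j ∈ Finset.univ) =>
      (abs_mul_le_add_sq_div_two 1 (v k j)).trans_eq (by rw [one_pow])
    simpa [one_mul, ← Finset.sum_div, Finset.sum_add_distrib] using this
  calc u k * ∑ j, |v k j| ≤ u k * ((n k + ∑ j, v k j ^ 2) / 2) := by gcongr; exact hu k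
    _ = (u k * n k + u k * ∑ j, v k j ^ 2) / 2 := by ring

section
variable {E : Type*} [MeasurableSpace E] {μ : Measure E}

theorem memLp_two_of_integral_sq_eq_one {g : E → ℝ} (hg : AEStronglyMeasurable g μ)
    (h : ∫ y, g y ^ 2 ∂μ = 1) : MemLp g 2 μ :=
  (memLp_two_iff_integrable_sq hg).2 (.of_integral_ne_zero (by simp [h]))

theorem integral_abs_mul_le_of_integral_sq_eq_one {f g : E → ℝ} (hf : MemLp f 2 μ)
    (hg : ∫ y, g y ^ 2 ∂μ = 1) : ∫ y, |f y * g y| ∂μ ≤ (∫ y, f y ^ 2 ∂μ + 1) / 2 := by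
  have hg_int : Integrable (fun y => g y ^ 2) μ := .of_integral_ne_zero (by simp [hg])
  rw [← hg, ← integral_add hf.integrable_sq hg_int, ← integral_div]
  exact integral_mono_of_nonneg (.of_forall fun y => abs_nonneg _)
    ((hf.integrable_sq.add hg_int).div_const 2)
    (.of_forall fun y => abs_mul_le_add_sq_div_two (f y) (g y))

theorem abs_sum_integral_mul_le {ι : Type*} [Fintype ι] {f : E → ℝ} {φ : ι → E → ℝ}
    (hf : MemLp f 2 μ) (hφ : ∀ j, ∫ y, φ j y ^ 2 ∂μ = 1) (z : ι → ℝ) :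
    |∑ j, (∫ y, f y * φ j y ∂μ) * z j| ≤ (∫ y, f y ^ 2 ∂μ + 1) / 2 * ∑ j, |z j| := calc
  |∑ j, (∫ y, f y * φ j y ∂μ) * z j| ≤ ∑ j, |(∫ y, f y * φ j y ∂μ) * z j| :=
      Finset.abs_sum_le_sum_abs _ _
  _ ≤ ∑ j, (∫ y, f y ^ 2 ∂μ + 1) / 2 * |z j| := by
      gcongr with j
      rw [abs_mul]
      gcongr
      exact abs_integral_le_integral_abs.trans
        (integral_abs_mul_le_of_integral_sq_eq_one hf (hφ j))
  _ = (∫ y, f y ^ 2 ∂μ + 1) / 2 * ∑ j, |z j| := by rw [Finset.mul_sum]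

theorem summable_integral_of_hasSum_of_nonneg {F : ℕ → E → ℝ} {s : E → ℝ}
    (hF : ∀ k y, 0 ≤ F k y) (hFi : ∀ k, Integrable (F k) μ) (hs : ∀ y, HasSum (F · y) (s y))
    (hsi : Integrable s μ) : Summable fun k => ∫ y, F k y ∂μ := by
  refine summable_of_sum_range_le (c := ∫ y, s y ∂μ)
    (fun k => integral_nonneg (hF k)) (fun m => ?_)
  rw [← integral_finsetSum _ fun k _ => hFi k]
  exact integral_mono (integrable_finsetSum _ fun k _ => hFi k) hsi
    fun y => sum_le_hasSum _ (fun k _ => hF k y) (hs y)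

theorem summable_mul_card_of_hasSum_sq {n : ℕ → ℕ} {φ : (k : ℕ) → Fin (n k) → E → ℝ}
    {u : ℕ → ℝ} {s : E → ℝ} (hu : ∀ k, 0 ≤ u k) (hφ : ∀ k j, ∫ y, φ k j y ^ 2 ∂μ = 1)
    (hs : ∀ y, HasSum (fun k => u k * ∑ j, φ k j y ^ 2) (s y)) (hsi : Integrable s μ) :
    Summable fun k => u k * n k := by
  have hφi : ∀ k j, Integrable (fun y => φ k j y ^ 2) μ := fun k j =>
    .of_integral_ne_zero (by simp [hφ])
  have := summable_integral_of_hasSum_of_nonneg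
    (fun k y => mul_nonneg (hu k) (Finset.sum_nonneg fun j _ => sq_nonneg _))
    (fun k => (integrable_finsetSum _ fun j _ => hφi k j).const_mul _) hs hsi
  simpa [integral_const_mul, integral_finsetSum _ fun j _ => hφi _ j, hφ] using this

theorem hasSum_integral_mul_of_hasSum_s10 {ι : ℕ → Type*} [∀ k, Fintype (ι k)]
    {φ : (k : ℕ) → ι k → E → ℝ} {u : ℕ → ℝ} {ψ : (k : ℕ) → ι k → ℝ} {K f : E → ℝ} {C : ℝ}
    (hu : ∀ k, 0 ≤ u k) (hK : ∀ y, HasSum (fun k => u k * ∑ j, ψ k j * φ k j y) (K y))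
    (hψ : Summable fun k => u k * ∑ j, |ψ k j|)
    (hfφ : ∀ k j, Integrable (fun y => f y * φ k j y) μ)
    (hC : ∀ k j, ∫ y, |f y * φ k j y| ∂μ ≤ C) :
    HasSum (fun k => u k * ∑ j, (∫ y, f y * φ k j y ∂μ) * ψ k j) (∫ y, K y * f y ∂μ) := by
  set F : ℕ → E → ℝ := fun k y => u k * (∑ j, ψ k j * φ k j y) * f y
  have hF : ∀ k, F k = fun y => ∑ j, u k * ψ k j * (f y * φ k j y) := fun k => by
    ext y
    simp only [F, Finset.mul_sum, Finset.sum_mul]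
    exact Finset.sum_congr rfl fun j _ => by ring
  have hFi : ∀ k, Integrable (F k) μ := fun k => by
    rw [hF]
    exact integrable_finsetSum _ fun j _ => (hfφ k j).const_mul _
  have hFint : ∀ k, ∫ y, F k y ∂μ = u k * ∑ j, (∫ y, f y * φ k j y ∂μ) * ψ k j := fun k => by
    rw [hF, integral_finsetSum _ fun j _ => (hfφ k j).const_mul _, Finset.mul_sum]
    exact Finset.sum_congr rfl fun j _ => by rw [integral_const_mul]; ring
  have hFnorm : ∀ k, ∫ y, ‖F k y‖ ∂μ ≤ C * (u k * ∑ j, |ψ k j|) := fun k => calc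
    ∫ y, ‖F k y‖ ∂μ ≤ ∫ y, ∑ j, u k * |ψ k j| * |f y * φ k j y| ∂μ := by
        refine integral_mono (hFi k).norm
          (integrable_finsetSum _ fun j _ => (hfφ k j).abs.const_mul _) fun y => ?_
        rw [hF]
        refine (norm_sum_le _ _).trans_eq (Finset.sum_congr rfl fun j _ => ?_)
        rw [Real.norm_eq_abs, abs_mul, abs_mul, abs_of_nonneg (hu k)]
    _ = u k * ∑ j, |ψ k j| * ∫ y, |f y * φ k j y| ∂μ := by
        rw [integral_finsetSum _ fun j _ => (hfφ k j).abs.const_mul _, Finset.mul_sum]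
        exact Finset.sum_congr rfl fun j _ => by rw [integral_const_mul]; ring
    _ ≤ u k * ∑ j, |ψ k j| * C := by gcongr with j; exacts [hu k, hC k j]
    _ = C * (u k * ∑ j, |ψ k j|) := by rw [← Finset.sum_mul]; ring
  have hsum : Summable fun k => ∫ y, ‖F k y‖ ∂μ :=
    (hψ.mul_left C).of_nonneg_of_le (fun k => integral_nonneg fun y => norm_nonneg _) hFnorm
  have hFsum : ∀ y, ∑' k, F k y = K y * f y := fun y => ((hK y).mul_right (f y)).tsum_eq
  simpa only [hFint, hFsum] using hasSum_integral_of_summable_integral_norm hFi hsum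

end

theorem stmt_10_general {E : Type*} [MeasurableSpace E] (μ : Measure E)
    (lam : ℕ → ℝ) (hlam : StrictMono lam)
    (n : ℕ → ℕ) (φ : (k : ℕ) → Fin (n k) → E → ℝ)
    (hφmeas : ∀ k j, Measurable (φ k j))
    (horth : ∀ (k k' : ℕ) (j : Fin (n k)) (j' : Fin (n k')),
      ∫ x, φ k j x * φ k' j' x ∂μ = if k = k' ∧ (j : ℕ) = (j' : ℕ) then 1 else 0)
    (q : ℝ → E → E → ℝ)
    (hq : ∀ t x y, 0 < t →
      HasSum (fun k => Real.exp (-lam k * t) * ∑ j, φ k j x * φ k j y) (q t x y))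
    (a : ℝ → E → ℝ) (ha : ∀ t x, a t x = q t x x)
    (hInt : ∀ t, 0 < t → Integrable (a t) μ)
    (T : ℝ → (E → ℝ) → E → ℝ)
    (hT : ∀ t (g : E → ℝ) x, 0 < t → T t g x = ∫ y, q t x y * g y ∂μ)
    (f : E → ℝ) (hf : MemLp f 2 μ)
    -- γ(f) < ∞ : the smallest index with a nonzero coefficient
    (γ : ℕ)
    (hγlow : ∀ k < γ, ∀ j : Fin (n k), ∫ y, f y * φ k j y ∂μ = 0) :
    ∀ x : E,
      Filter.Tendsto (fun t => Real.exp (lam γ * t) * T t f x) Filter.atTop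
        (nhds (∑ j : Fin (n γ), (∫ y, f y * φ γ j y ∂μ) * φ γ j x)) := by
  intro x
  have hexp_nonneg : ∀ t k, 0 ≤ Real.exp (-lam k * t) := fun t k => (Real.exp_pos _).le
  have hφsq : ∀ k j, ∫ y, φ k j y ^ 2 ∂μ = 1 := fun k j => by simpa [sq] using horth k k j j
  have hdiag : ∀ t, 0 < t → ∀ y,
      HasSum (fun k => Real.exp (-lam k * t) * ∑ j, φ k j y ^ 2) (a t y) := fun t ht y => by
    simpa only [ha, sq] using hq t y y ht
  have hsum_abs : ∀ t, 0 < t → Summable fun k => Real.exp (-lam k * t) * ∑ j, |φ k j x| :=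
    fun t ht => summable_mul_sum_abs (hexp_nonneg t)
      (summable_mul_card_of_hasSum_sq (hexp_nonneg t) hφsq (hdiag t ht) (hInt t ht))
      (hdiag t ht x).summable
  have hexpand : ∀ t, 0 < t → HasSum
      (fun k => Real.exp (-lam k * t) * ∑ j, (∫ y, f y * φ k j y ∂μ) * φ k j x) (T t f x) :=
    fun t ht => hT t f x ht ▸ hasSum_integral_mul_of_hasSum_s10 (hexp_nonneg t) (hq t x · ht)
      (hsum_abs t ht)
      (fun k j => hf.integrable_mul
        (memLp_two_of_integral_sq_eq_one (hφmeas k j).aestronglyMeasurable (hφsq k j)))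
      (fun k j => integral_abs_mul_le_of_integral_sq_eq_one hf (hφsq k j))
  refine (tendsto_exp_mul_tsum_of_eq_zero_of_lt hlam (t₀ := 1)
    (S := fun k => ∑ j, (∫ y, f y * φ k j y ∂μ) * φ k j x)
    (fun k hk => by simp [hγlow k hk]) ?_).congr' ?_
  · refine ((hsum_abs 1 one_pos).mul_left ((∫ y, f y ^ 2 ∂μ + 1) / 2)).of_nonneg_of_le
      (fun k => by positivity) fun k => ?_
    rw [mul_left_comm]
    gcongr
    exact abs_sum_integral_mul_le hf (hφsq k) _
  · filter_upwards [eventually_gt_atTop 0] with t ht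
    rw [(hexpand t ht).tsum_eq]

/-- Pointwise limit: `e^{λ_{γ(f)} t} T_t f(x) → ∑ⱼ aⱼ^{γ(f)} φⱼ^{(γ(f))}(x)`. -/
theorem stmt_10 {E : Type*} [MeasurableSpace E] (μ : Measure E) [SigmaFinite μ]
    (lam : ℕ → ℝ) (hlam : StrictMono lam)
    (n : ℕ → ℕ) (φ : (k : ℕ) → Fin (n k) → E → ℝ)
    (hφmeas : ∀ k j, Measurable (φ k j))
    (horth : ∀ (k k' : ℕ) (j : Fin (n k)) (j' : Fin (n k')),
      ∫ x, φ k j x * φ k' j' x ∂μ = if k = k' ∧ (j : ℕ) = (j' : ℕ) then 1 else 0)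
    (q : ℝ → E → E → ℝ)
    (hq : ∀ t x y, 0 < t →
      HasSum (fun k => Real.exp (-lam k * t) * ∑ j, φ k j x * φ k j y) (q t x y))
    (a : ℝ → E → ℝ) (ha : ∀ t x, a t x = q t x x)
    (hInt : ∀ t, 0 < t → Integrable (a t) μ)
    (T : ℝ → (E → ℝ) → E → ℝ)
    (hT : ∀ t (g : E → ℝ) x, 0 < t → T t g x = ∫ y, q t x y * g y ∂μ)
    (f : E → ℝ) (hf : MemLp f 2 μ)
    -- γ(f) < ∞ : the smallest index with a nonzero coefficient
    (γ : ℕ)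
    (hγlow : ∀ k < γ, ∀ j : Fin (n k), ∫ y, f y * φ k j y ∂μ = 0)
    (hγne : ∃ j : Fin (n γ), ∫ y, f y * φ γ j y ∂μ ≠ 0) :
    ∀ x : E,
      Filter.Tendsto (fun t => Real.exp (lam γ * t) * T t f x) Filter.atTop
        (nhds (∑ j : Fin (n γ), (∫ y, f y * φ γ j y ∂μ) * φ γ j x)) :=
  stmt_10_general μ lam hlam n φ hφmeas horth q hq a ha hInt T hT f hf γ hγlow
end
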